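/- arXiv:math/0703622 — 2 statements merged into one kernel-verified Lean document; each statement's English description precedes it below -/
import Mathlib

section
/- The integral identity ∫_{1/2}^1 dt / (4(1−t²)(4t²−1)²)^{1/3} = (1/12)·B(1/3, 1/6) holds, where B is the Beta function. -/
open MeasureTheory

noncomputable def Beta (a b : ℝ) : ℝ := ∫ t in (0:ℝ)..1, t ^ (a-1) * (1-t) ^ (b-1)

/-! For `t = cos θ` the polynomial `P t = 4 (1 - t²) (4 t² - 1)²` equals `4 sin² 3θ`. Writing
`x = cos φ` with `x ∈ (0, 1/2)`, the substitutions `t = cos (φ - π/3)` and `t = cos (2π/3 - φ)`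
map `(0, 1/2)` onto `(√3/2, 1)` and `(1/2, √3/2)`, preserve `P`, and their Jacobians add up to
`1`; hence `∫_{1/2}^1 P^{-1/3} = ∫_0^{1/2} P^{-1/3}`. On `(0, 1/2)` the rational substitution
`s = 1 - (2x³ / (1 - 3x²))²` onto `(0, 1)` turns `s^{-2/3} (1 - s)^{-5/6} ds` into
`12 P(x)^{-1/3} dx`.

Working with lower Lebesgue integrals avoids any integrability argument: both sides of the identity
are `toReal` of equal `ℝ≥0∞`-valued integrals. -/

open Set
open scoped ENNReal

theorem lintegral_Ioo_image_eq_lintegral_deriv_mul {φ φ' : ℝ → ℝ} {a b : ℝ} (hab : a ≤ b)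
    (hφ : ContinuousOn φ (Icc a b)) (hφ' : ∀ x ∈ Ioo a b, HasDerivAt φ (φ' x) x)
    (hpos : ∀ x ∈ Ioo a b, 0 < φ' x) (g : ℝ → ℝ≥0∞) :
    ∫⁻ t in Ioo (φ a) (φ b), g t = ∫⁻ x in Ioo a b, ENNReal.ofReal (φ' x) * g (φ x) := by
  have hmono : StrictMonoOn φ (Icc a b) :=
    strictMonoOn_of_hasDerivWithinAt_pos (convex_Icc a b) hφ
      (fun x hx ↦ (hφ' x (by rwa [← interior_Icc])).hasDerivWithinAt)
      (fun x hx ↦ hpos x (by rwa [← interior_Icc]))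
  rw [← hφ.image_Ioo_of_strictMonoOn hab hmono, lintegral_image_eq_lintegral_abs_deriv_mul
    measurableSet_Ioo (fun x hx ↦ (hφ' x hx).hasDerivWithinAt)
    (hmono.mono Ioo_subset_Icc_self).injOn]
  exact setLIntegral_congr_fun measurableSet_Ioo fun x hx ↦ by rw [abs_of_pos (hpos x hx)]

theorem lintegral_Ioo_image_eq_lintegral_neg_deriv_mul {φ φ' : ℝ → ℝ} {a b : ℝ} (hab : a ≤ b)
    (hφ : ContinuousOn φ (Icc a b)) (hφ' : ∀ x ∈ Ioo a b, HasDerivAt φ (φ' x) x)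
    (hneg : ∀ x ∈ Ioo a b, φ' x < 0) (g : ℝ → ℝ≥0∞) :
    ∫⁻ t in Ioo (φ b) (φ a), g t = ∫⁻ x in Ioo a b, ENNReal.ofReal (-φ' x) * g (φ x) := by
  have hanti : StrictAntiOn φ (Icc a b) :=
    strictAntiOn_of_hasDerivWithinAt_neg (convex_Icc a b) hφ
      (fun x hx ↦ (hφ' x (by rwa [← interior_Icc])).hasDerivWithinAt)
      (fun x hx ↦ hneg x (by rwa [← interior_Icc]))
  rw [← hφ.image_Ioo_of_strictAntiOn hab hanti, lintegral_image_eq_lintegral_abs_deriv_mul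
    measurableSet_Ioo (fun x hx ↦ (hφ' x hx).hasDerivWithinAt)
    (hanti.mono Ioo_subset_Icc_self).injOn]
  exact setLIntegral_congr_fun measurableSet_Ioo fun x hx ↦ by rw [abs_of_neg (hneg x hx)]

theorem lintegral_Ioo_add_lintegral_Ioo {a b c : ℝ} (hab : a ≤ b) (hbc : b ≤ c)
    (f : ℝ → ℝ≥0∞) :
    (∫⁻ x in Ioo a b, f x) + ∫⁻ x in Ioo b c, f x = ∫⁻ x in Ioo a c, f x := by
  rw [setLIntegral_congr Ioo_ae_eq_Ioc, setLIntegral_congr Ioo_ae_eq_Ioc,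
    setLIntegral_congr Ioo_ae_eq_Ioc, ← Ioc_union_Ioc_eq_Ioc hab hbc,
    lintegral_union measurableSet_Ioc (Ioc_disjoint_Ioc_of_le le_rfl)]

theorem intervalIntegral_eq_toReal_lintegral_Ioo {f : ℝ → ℝ} {a b : ℝ} (hab : a ≤ b)
    (hf : Measurable f) (hf₀ : ∀ x ∈ Ioo a b, 0 ≤ f x) :
    ∫ x in a..b, f x = (∫⁻ x in Ioo a b, ENNReal.ofReal (f x)).toReal := by
  rw [intervalIntegral.integral_of_le hab, integral_Ioc_eq_integral_Ioo,
    integral_eq_lintegral_of_nonneg_ae (ae_restrict_of_forall_mem measurableSet_Ioo hf₀)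
      hf.aestronglyMeasurable]

namespace TripleAngle

def P (t : ℝ) : ℝ := 4 * (1 - t ^ 2) * (4 * t ^ 2 - 1) ^ 2

theorem P_neg (x : ℝ) : P (-x) = P x := by
  simp only [P, neg_sq]

theorem P_half_add {x y : ℝ} (h : y ^ 2 = 3 - 3 * x ^ 2) : P ((x + y) / 2) = P x := by
  simp only [P]
  linear_combination (3 * y ^ 2 - y ^ 4 + 6 * x * y - 6 * x * y ^ 3 - 9 * x ^ 2
    - 12 * x ^ 2 * y ^ 2 - 2 * x ^ 3 * y + 21 * x ^ 4) * h

-- For `x = cos φ` with `0 ≤ φ ≤ π`, these are `cos (φ - π/3)` and `cos (2π/3 - φ)`.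
noncomputable def cosSubPiDivThree (x : ℝ) : ℝ := (x + √(3 - 3 * x ^ 2)) / 2

noncomputable def cosTwoPiDivThreeSub (x : ℝ) : ℝ := (√(3 - 3 * x ^ 2) - x) / 2

theorem P_cosSubPiDivThree {x : ℝ} (hx : x ^ 2 ≤ 1) : P (cosSubPiDivThree x) = P x :=
  P_half_add (Real.sq_sqrt (by linarith))

theorem P_cosTwoPiDivThreeSub {x : ℝ} (hx : x ^ 2 ≤ 1) : P (cosTwoPiDivThreeSub x) = P x := by
  rw [cosTwoPiDivThreeSub, sub_eq_neg_add,
    P_half_add (by rw [neg_sq]; exact Real.sq_sqrt (by linarith)), P_neg]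

theorem hasDerivAt_sqrt_three_sub_three_mul_sq {x : ℝ} (hx : x ^ 2 < 1) :
    HasDerivAt (fun x ↦ √(3 - 3 * x ^ 2)) (-(3 * x) / √(3 - 3 * x ^ 2)) x := by
  refine ((((hasDerivAt_pow 2 x).const_mul 3).const_sub 3).sqrt (by linarith)).congr_deriv ?_
  field_simp
  ring

theorem hasDerivAt_cosSubPiDivThree {x : ℝ} (hx : x ^ 2 < 1) :
    HasDerivAt cosSubPiDivThree ((1 - 3 * x / √(3 - 3 * x ^ 2)) / 2) x := by
  refine (((hasDerivAt_id x).add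
    (hasDerivAt_sqrt_three_sub_three_mul_sq hx)).div_const 2).congr_deriv ?_
  ring

theorem hasDerivAt_cosTwoPiDivThreeSub {x : ℝ} (hx : x ^ 2 < 1) :
    HasDerivAt cosTwoPiDivThreeSub (-((1 + 3 * x / √(3 - 3 * x ^ 2)) / 2)) x := by
  refine (((hasDerivAt_sqrt_three_sub_three_mul_sq hx).sub
    (hasDerivAt_id x)).div_const 2).congr_deriv ?_
  ring

theorem three_mul_div_sqrt_lt_one {x : ℝ} (hx : x ^ 2 < 1 / 4) :
    3 * x / √(3 - 3 * x ^ 2) < 1 := by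
  rw [div_lt_one (Real.sqrt_pos.2 (by linarith))]
  exact (le_abs_self _).trans_lt ((Real.lt_sqrt (abs_nonneg _)).2 (by rw [sq_abs]; linarith))

theorem three_mul_div_sqrt_nonneg {x : ℝ} (hx : 0 ≤ x) : 0 ≤ 3 * x / √(3 - 3 * x ^ 2) := by
  positivity

theorem sq_lt_quarter_of_mem_Ioo {x : ℝ} (hx : x ∈ Ioo (0:ℝ) (1 / 2)) : x ^ 2 < 1 / 4 := by
  nlinarith [hx.1, hx.2]

theorem lintegral_Ioo_half_sqrt_three_div_two (g : ℝ → ℝ≥0∞) :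
    ∫⁻ t in Ioo (1 / 2) (√3 / 2), g (P t)
      = ∫⁻ x in Ioo 0 (1 / 2), ENNReal.ofReal ((1 + 3 * x / √(3 - 3 * x ^ 2)) / 2) * g (P x) := by
  have h := lintegral_Ioo_image_eq_lintegral_neg_deriv_mul (a := 0) (b := 1 / 2) (by norm_num)
    (by unfold cosTwoPiDivThreeSub; fun_prop : Continuous cosTwoPiDivThreeSub).continuousOn
    (fun x hx ↦ hasDerivAt_cosTwoPiDivThreeSub (by linarith [sq_lt_quarter_of_mem_Ioo hx]))
    (fun x hx ↦ by linarith [three_mul_div_sqrt_nonneg hx.1.le])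
    (fun t ↦ g (P t))
  rw [show cosTwoPiDivThreeSub (1 / 2) = 1 / 2 by norm_num [cosTwoPiDivThreeSub],
    show cosTwoPiDivThreeSub 0 = √3 / 2 by norm_num [cosTwoPiDivThreeSub]] at h
  rw [h]
  refine setLIntegral_congr_fun measurableSet_Ioo fun x hx ↦ ?_
  rw [neg_neg, P_cosTwoPiDivThreeSub (by linarith [sq_lt_quarter_of_mem_Ioo hx])]

theorem lintegral_Ioo_sqrt_three_div_two_one (g : ℝ → ℝ≥0∞) :
    ∫⁻ t in Ioo (√3 / 2) 1, g (P t)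
      = ∫⁻ x in Ioo 0 (1 / 2), ENNReal.ofReal ((1 - 3 * x / √(3 - 3 * x ^ 2)) / 2) * g (P x) := by
  have h := lintegral_Ioo_image_eq_lintegral_deriv_mul (a := 0) (b := 1 / 2) (by norm_num)
    (by unfold cosSubPiDivThree; fun_prop : Continuous cosSubPiDivThree).continuousOn
    (fun x hx ↦ hasDerivAt_cosSubPiDivThree (by linarith [sq_lt_quarter_of_mem_Ioo hx]))
    (fun x hx ↦ by linarith [three_mul_div_sqrt_lt_one (sq_lt_quarter_of_mem_Ioo hx)])
    (fun t ↦ g (P t))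
  rw [show cosSubPiDivThree 0 = √3 / 2 by norm_num [cosSubPiDivThree],
    show cosSubPiDivThree (1 / 2) = 1 by norm_num [cosSubPiDivThree]] at h
  rw [h]
  refine setLIntegral_congr_fun measurableSet_Ioo fun x hx ↦ ?_
  rw [P_cosSubPiDivThree (by linarith [sq_lt_quarter_of_mem_Ioo hx])]

theorem lintegral_comp_P_Ioo_half_one (g : ℝ → ℝ≥0∞) (hg : Measurable g) :
    ∫⁻ t in Ioo (1 / 2) 1, g (P t) = ∫⁻ x in Ioo 0 (1 / 2), g (P x) := by
  have hsqrt3 : 1 ≤ √3 ∧ √3 ≤ 2 := by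
    constructor <;> nlinarith [Real.sq_sqrt (show (0:ℝ) ≤ 3 by norm_num), Real.sqrt_nonneg 3]
  have hmeas : Measurable fun x : ℝ ↦
      ENNReal.ofReal ((1 + 3 * x / √(3 - 3 * x ^ 2)) / 2) * g (P x) := by
    unfold P; fun_prop
  rw [← lintegral_Ioo_add_lintegral_Ioo (b := √3 / 2) (by linarith) (by linarith),
    lintegral_Ioo_half_sqrt_three_div_two, lintegral_Ioo_sqrt_three_div_two_one,
    ← lintegral_add_left' hmeas.aemeasurable]
  refine setLIntegral_congr_fun measurableSet_Ioo fun x hx ↦ ?_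
  have hr := three_mul_div_sqrt_lt_one (sq_lt_quarter_of_mem_Ioo hx)
  have hr₀ := three_mul_div_sqrt_nonneg hx.1.le
  set r := 3 * x / √(3 - 3 * x ^ 2)
  rw [← add_mul, ← ENNReal.ofReal_add (by linarith) (by linarith),
    show (1 + r) / 2 + (1 - r) / 2 = 1 by ring, ENNReal.ofReal_one, one_mul]

noncomputable def betaSubst (x : ℝ) : ℝ := 1 - (2 * x ^ 3 / (1 - 3 * x ^ 2)) ^ 2

theorem hasDerivAt_betaSubst {x : ℝ} (hx : 1 - 3 * x ^ 2 ≠ 0) :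
    HasDerivAt betaSubst (-(24 * x ^ 5 * (1 - x ^ 2) / (1 - 3 * x ^ 2) ^ 3)) x := by
  refine (((((hasDerivAt_pow 3 x).const_mul 2).div
    (((hasDerivAt_pow 2 x).const_mul 3).const_sub 1) hx).pow 2).const_sub 1).congr_deriv ?_
  simp only [Pi.div_apply]
  norm_num
  field_simp
  ring

theorem betaSubst_eq {x : ℝ} (hx : 1 - 3 * x ^ 2 ≠ 0) :
    betaSubst x = (1 - x ^ 2) ^ 2 * (1 - 4 * x ^ 2) / (1 - 3 * x ^ 2) ^ 2 := by
  rw [betaSubst, div_pow, eq_div_iff (pow_ne_zero 2 hx), sub_mul,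
    div_mul_cancel₀ _ (pow_ne_zero 2 hx)]
  ring

theorem neg_deriv_betaSubst_mul_betaIntegrand {x : ℝ} (hx : x ∈ Ioo (0:ℝ) (1 / 2)) :
    24 * x ^ 5 * (1 - x ^ 2) / (1 - 3 * x ^ 2) ^ 3 *
        (betaSubst x ^ ((1:ℝ) / 3 - 1) * (1 - betaSubst x) ^ ((1:ℝ) / 6 - 1))
      = 12 * (1 / P x ^ ((1:ℝ) / 3)) := by
  obtain ⟨h0, h1⟩ := hx
  have hA : 0 < 1 - x ^ 2 := by nlinarith
  have hB : 0 < 1 - 4 * x ^ 2 := by nlinarith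
  have hD : 0 < 1 - 3 * x ^ 2 := by nlinarith
  rw [show 1 - betaSubst x = 4 * x ^ 6 / (1 - 3 * x ^ 2) ^ 2 by
      rw [betaSubst, sub_sub_cancel, div_pow]; ring,
    betaSubst_eq hD.ne', show P x = 4 * (1 - x ^ 2) * (1 - 4 * x ^ 2) ^ 2 by rw [P]; ring]
  generalize 1 - x ^ 2 = A at *
  generalize 1 - 4 * x ^ 2 = B at *
  generalize 1 - 3 * x ^ 2 = D at *
  have hs : 0 ≤ A ^ 2 * B / D ^ 2 := by positivity
  have hs' : 0 ≤ 4 * x ^ 6 / D ^ 2 := by positivity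
  have hP : 0 ≤ 4 * A * B ^ 2 := by positivity
  -- both sides are positive, and their sixth powers are rational in `x, A, B, D`
  rw [← pow_left_inj₀ (by positivity) (by positivity) (by norm_num : 6 ≠ 0)]
  simp only [mul_pow, div_pow, ← Real.rpow_mul_natCast hs, ← Real.rpow_mul_natCast hs',
    ← Real.rpow_mul_natCast hP]
  norm_num
  field_simp
  ring

theorem lintegral_betaIntegrand_eq_twelve_mul :
    ∫⁻ s in Ioo 0 1, ENNReal.ofReal (s ^ ((1:ℝ) / 3 - 1) * (1 - s) ^ ((1:ℝ) / 6 - 1))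
      = 12 * ∫⁻ x in Ioo 0 (1 / 2), ENNReal.ofReal (1 / P x ^ ((1:ℝ) / 3)) := by
  have hD : ∀ x ∈ Icc (0:ℝ) (1 / 2), 1 - 3 * x ^ 2 ≠ 0 := fun x hx ↦ by nlinarith [hx.1, hx.2]
  have hpos : ∀ x ∈ Ioo (0:ℝ) (1 / 2), 0 < 24 * x ^ 5 * (1 - x ^ 2) / (1 - 3 * x ^ 2) ^ 3 := by
    rintro x ⟨h0, h1⟩
    have : 0 < 1 - 3 * x ^ 2 := by nlinarith
    have : 0 < 1 - x ^ 2 := by nlinarith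
    positivity
  have h := lintegral_Ioo_image_eq_lintegral_neg_deriv_mul (a := 0) (b := 1 / 2) (by norm_num)
    (fun x hx ↦ (hasDerivAt_betaSubst (hD x hx)).continuousAt.continuousWithinAt)
    (fun x hx ↦ hasDerivAt_betaSubst (hD x (Ioo_subset_Icc_self hx)))
    (fun x hx ↦ neg_neg_of_pos (hpos x hx))
    (fun s ↦ ENNReal.ofReal (s ^ ((1:ℝ) / 3 - 1) * (1 - s) ^ ((1:ℝ) / 6 - 1)))
  rw [show betaSubst (1 / 2) = 0 by norm_num [betaSubst],
    show betaSubst 0 = 1 by norm_num [betaSubst]] at h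
  rw [h, ← lintegral_const_mul' _ _ ENNReal.ofNat_ne_top]
  refine setLIntegral_congr_fun measurableSet_Ioo fun x hx ↦ ?_
  rw [neg_neg, ← ENNReal.ofReal_mul (hpos x hx).le, neg_deriv_betaSubst_mul_betaIntegrand hx,
    ENNReal.ofReal_mul (by norm_num), ENNReal.ofReal_ofNat]

end TripleAngle

open TripleAngle

theorem stmt_7 :
    (∫ t in (1/2:ℝ)..1, 1 / (4 * (1 - t^2) * (4 * t^2 - 1)^2) ^ ((1:ℝ)/3)) = (1/12) * Beta (1/3) (1/6) := by
  change (∫ t in (1 / 2 : ℝ)..1, 1 / P t ^ ((1:ℝ) / 3)) = 1 / 12 * Beta (1 / 3) (1 / 6)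
  have hP : Measurable P := by unfold P; fun_prop
  have hP₀ : ∀ t ∈ Ioo (1 / 2 : ℝ) 1, 0 ≤ P t := fun t ht ↦
    mul_nonneg (mul_nonneg zero_le_four (by nlinarith [ht.1, ht.2])) (sq_nonneg _)
  rw [intervalIntegral_eq_toReal_lintegral_Ioo (by norm_num) (by fun_prop)
      (fun t ht ↦ by have := hP₀ t ht; positivity),
    lintegral_comp_P_Ioo_half_one (fun p ↦ ENNReal.ofReal (1 / p ^ ((1:ℝ) / 3))) (by fun_prop),
    Beta, intervalIntegral_eq_toReal_lintegral_Ioo (by norm_num) (by fun_prop)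
      (fun s hs ↦ by
        have := hs.1
        have : 0 < 1 - s := by linarith [hs.2]
        positivity),
    lintegral_betaIntegrand_eq_twelve_mul, ENNReal.toReal_mul, ENNReal.toReal_ofNat]
  ring
end

section
/- For the real 4×8 matrix Ω_R with rows (3α, 3α, 0, −(3/2)α, 0, 0, 0, 0), (0, 0, 0, (3/2)α, 0, 0, 0, 0), (0, 0, 0, 0, 6γ, 0, −(3/2)γ, −3γ), (0, 0, 0, 0, 0, −√3γ, −(√3/2)γ, √3γ), where α, γ > 0, the lattice generated by its columns equals the lattice generated by the columns of Λ = [[3α, (3/2)α, 0, 0],[0, (3/2)α, 0, 0],[0, 0, 3γ, (3/2)γ],[0, 0, 0, (√3/2)γ]]. -/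
lemma mem2_aux {s : Set (Fin 4 → ℝ)} {x y v : Fin 4 → ℝ} (hx : x ∈ s) (hy : y ∈ s)
    (a b : ℤ) (h : v = a • x + b • y) : v ∈ Submodule.span ℤ s := by
  subst h
  exact Submodule.add_mem _ (Submodule.smul_mem _ a (Submodule.subset_span hx))
    (Submodule.smul_mem _ b (Submodule.subset_span hy))

lemma comb_aux (a b : ℤ) (x0 x1 x2 x3 y0 y1 y2 y3 : ℝ) :
    (a : ℤ) • (![x0,x1,x2,x3] : Fin 4 → ℝ) + (b : ℤ) • (![y0,y1,y2,y3] : Fin 4 → ℝ)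
      = ![a*x0+b*y0, a*x1+b*y1, a*x2+b*y2, a*x3+b*y3] := by
  funext j
  fin_cases j <;>
    simp [Matrix.vecHead, Matrix.vecTail] <;> ring

theorem stmt_12 (α γ : ℝ) (hα : 0 < α) (hγ : 0 < γ) :
    let ΩR : Matrix (Fin 4) (Fin 8) ℝ :=
      !![3*α, 3*α, 0, -(3/2)*α, 0, 0, 0, 0;
         0, 0, 0, (3/2)*α, 0, 0, 0, 0;
         0, 0, 0, 0, 6*γ, 0, -(3/2)*γ, -3*γ;
         0, 0, 0, 0, 0, -Real.sqrt 3 * γ, -(Real.sqrt 3/2)*γ, Real.sqrt 3 * γ]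
    let Λ : Matrix (Fin 4) (Fin 4) ℝ :=
      !![3*α, (3/2)*α, 0, 0;
         0, (3/2)*α, 0, 0;
         0, 0, 3*γ, (3/2)*γ;
         0, 0, 0, (Real.sqrt 3/2)*γ]
    Submodule.span ℤ (Set.range ΩR.transpose) = Submodule.span ℤ (Set.range Λ.transpose) := by
  intro ΩR Λ
  have L0 : Λ.transpose 0 = ![3*α, 0, 0, 0] := by funext j; fin_cases j <;> rfl
  have L1 : Λ.transpose 1 = ![(3/2)*α, (3/2)*α, 0, 0] := by funext j; fin_cases j <;> rfl
  have L2 : Λ.transpose 2 = ![0, 0, 3*γ, 0] := by funext j; fin_cases j <;> rfl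
  have L3 : Λ.transpose 3 = ![0, 0, (3/2)*γ, (Real.sqrt 3/2)*γ] := by
    funext j; fin_cases j <;> rfl
  have O0 : ΩR.transpose 0 = ![3*α, 0, 0, 0] := by funext j; fin_cases j <;> rfl
  have O1 : ΩR.transpose 1 = ![3*α, 0, 0, 0] := by funext j; fin_cases j <;> rfl
  have O2 : ΩR.transpose 2 = ![0, 0, 0, 0] := by funext j; fin_cases j <;> rfl
  have O3 : ΩR.transpose 3 = ![-(3/2)*α, (3/2)*α, 0, 0] := by funext j; fin_cases j <;> rfl
  have O4 : ΩR.transpose 4 = ![0, 0, 6*γ, 0] := by funext j; fin_cases j <;> rfl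
  have O5 : ΩR.transpose 5 = ![0, 0, 0, -Real.sqrt 3 * γ] := by funext j; fin_cases j <;> rfl
  have O6 : ΩR.transpose 6 = ![0, 0, -(3/2)*γ, -(Real.sqrt 3/2)*γ] := by
    funext j; fin_cases j <;> rfl
  have O7 : ΩR.transpose 7 = ![0, 0, -3*γ, Real.sqrt 3 * γ] := by funext j; fin_cases j <;> rfl
  have veq : ∀ (u v : Fin 4 → ℝ), (∀ j, u j = v j) → u = v := fun u v h => funext h
  apply le_antisymm <;> rw [Submodule.span_le] <;> rintro x ⟨i, rfl⟩
  · fin_cases i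
    · exact mem2_aux ⟨0, rfl⟩ ⟨1, rfl⟩ 1 0
        (by show ΩR.transpose 0 = _; rw [O0, L0, L1, comb_aux]; funext j; fin_cases j <;> norm_num)
    · exact mem2_aux ⟨0, rfl⟩ ⟨1, rfl⟩ 1 0
        (by show ΩR.transpose 1 = _; rw [O1, L0, L1, comb_aux]; funext j; fin_cases j <;> norm_num)
    · exact mem2_aux ⟨0, rfl⟩ ⟨1, rfl⟩ 0 0
        (by show ΩR.transpose 2 = _; rw [O2, L0, L1, comb_aux]; funext j; fin_cases j <;> norm_num)
    · exact mem2_aux ⟨1, rfl⟩ ⟨0, rfl⟩ 1 (-1)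
        (by show ΩR.transpose 3 = _; rw [O3, L0, L1, comb_aux]; funext j; fin_cases j <;> norm_num <;> ring)
    · exact mem2_aux ⟨2, rfl⟩ ⟨3, rfl⟩ 2 0
        (by show ΩR.transpose 4 = _; rw [O4, L2, L3, comb_aux]; funext j; fin_cases j <;> norm_num <;> ring)
    · exact mem2_aux ⟨2, rfl⟩ ⟨3, rfl⟩ 1 (-2)
        (by show ΩR.transpose 5 = _; rw [O5, L2, L3, comb_aux]; funext j; fin_cases j <;> norm_num <;> ring)
    · exact mem2_aux ⟨3, rfl⟩ ⟨2, rfl⟩ (-1) 0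
        (by show ΩR.transpose 6 = _; rw [O6, L2, L3, comb_aux]; funext j; fin_cases j <;> norm_num <;> ring)
    · exact mem2_aux ⟨3, rfl⟩ ⟨2, rfl⟩ 2 (-2)
        (by show ΩR.transpose 7 = _; rw [O7, L2, L3, comb_aux]; funext j; fin_cases j <;> norm_num <;> ring)
  · fin_cases i
    · exact mem2_aux ⟨0, rfl⟩ ⟨1, rfl⟩ 1 0
        (by show Λ.transpose 0 = _; rw [L0, O0, O1, comb_aux]; funext j; fin_cases j <;> norm_num)
    · exact mem2_aux ⟨0, rfl⟩ ⟨3, rfl⟩ 1 1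
        (by show Λ.transpose 1 = _; rw [L1, O0, O3, comb_aux]; funext j; fin_cases j <;> norm_num <;> ring)
    · exact mem2_aux ⟨5, rfl⟩ ⟨6, rfl⟩ 1 (-2)
        (by show Λ.transpose 2 = _; rw [L2, O5, O6, comb_aux]; funext j; fin_cases j <;> norm_num <;> ring)
    · exact mem2_aux ⟨6, rfl⟩ ⟨5, rfl⟩ (-1) 0
        (by show Λ.transpose 3 = _; rw [L3, O6, O5, comb_aux]; funext j; fin_cases j <;> norm_num <;> ring)
end
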